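/- The subharmonicity of $\varphi \circ g$ on the punctured disc plus boundedness yields subharmonicity with value extension: let $\varphi$ be a continuous real function on $\mathbb{D}$ such that for every $0 < r < 1$ and every $z$ with $0 < |z| < 1 - r$ (and the disc of radius $r$ around $z$ avoiding $0$), $\varphi(z) \le \frac{1}{2\pi}\int_0^{2\pi} \varphi(z + r e^{i\theta})\, d\theta$. Then the sub-mean value inequality also holds at $z = 0$: $\varphi(0) \le \frac{1}{2\pi}\int_0^{2\pi} \varphi(r e^{i\theta})\, d\theta$ for all $0 < r < 1$. -/

import Mathlib

open Metric Complex

/-!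
Subtract from `φ` the real part of an entire function `F` that is uniformly `ε`-close to `φ` on the
circle `‖w‖ = r`: it exists because trigonometric polynomials are dense in `C(𝕋)`, and `e^{inθ}`,
`e^{-inθ}` are the boundary values of `(w / r) ^ n` and of its conjugate. The difference `u` is
sub-mean off the origin and `≤ ε` on the circle. For `κ > 0` the function
`u + κ (log ‖w‖ + ‖w‖ ^ 2)` is strictly sub-mean on every annulus `δ ≤ ‖w‖ ≤ r`, so it is bounded by
its values on the two boundary circles; the logarithm makes the inner circle irrelevant for small
`δ`, and letting `κ → 0` and using continuity at `0` gives `u 0 ≤ ε`. The mean value property of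
`Re F` then transfers the estimate back to `φ`.
-/

open Real Filter Topology ComplexConjugate

variable {u : ℂ → ℝ} {S T : Set ℂ} {z : ℂ} {r s κ M δ : ℝ}

def SubmeanOn (u : ℂ → ℝ) (S : Set ℂ) : Prop :=
  ∀ z s, 0 < s → closedBall z s ⊆ S → u z ≤ circleAverage u z s

lemma SubmeanOn.mono (h : SubmeanOn u T) (hST : S ⊆ T) : SubmeanOn u S :=
  fun z s hs hzs => h z s hs (hzs.trans hST)

lemma ContinuousOn.circleIntegrable_of_closedBall_subset {E : Type*} [NormedAddCommGroup E]
    {f : ℂ → E} (hf : ContinuousOn f S) (hs : 0 ≤ s) (hzs : closedBall z s ⊆ S) :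
    CircleIntegrable f z s :=
  (hf.mono (sphere_subset_closedBall.trans hzs)).circleIntegrable hs

lemma circleAverage_re_of_differentiable {F : ℂ → ℂ} (hF : Differentiable ℂ F) (c : ℂ) (R : ℝ) :
    circleAverage (fun w => (F w).re) c R = (F c).re :=
  InnerProductSpace.HarmonicOnNhd.circleAverage_eq fun w _ => (hF.analyticAt w).harmonicAt_re

lemma SubmeanOn.sub_re {F : ℂ → ℂ} (h : SubmeanOn u S) (hu : ContinuousOn u S)
    (hF : Differentiable ℂ F) : SubmeanOn (fun w => u w - (F w).re) S := by
  intro z s hs hzs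
  have hFre : CircleIntegrable (fun w => (F w).re) z s :=
    (continuous_re.comp hF.continuous).continuousOn.circleIntegrable hs.le
  rw [circleAverage_fun_sub (hu.circleIntegrable_of_closedBall_subset hs.le hzs) hFre,
    circleAverage_re_of_differentiable hF]
  linarith [h z s hs hzs]

lemma log_norm_le_circleAverage_log_norm (hz : z ≠ 0) (hs : s ≠ 0) :
    Real.log ‖z‖ ≤ circleAverage (fun w => Real.log ‖w‖) z s := by
  have h := circleAverage_log_norm_sub_const_eq_log_radius_add_posLog (a := 0) (c := z) hs
  simp only [sub_zero] at h
  rw [h]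
  have : Real.log ‖z‖ = Real.log s + Real.log (s⁻¹ * ‖z‖) := by
    rw [Real.log_mul (inv_ne_zero hs) (norm_ne_zero_iff.2 hz), Real.log_inv]; ring
  rw [this]
  gcongr
  exact le_max_right _ _

lemma circleAverage_norm_sq (z : ℂ) (s : ℝ) :
    circleAverage (fun w => ‖w‖ ^ 2) z s = ‖z‖ ^ 2 + s ^ 2 := by
  have hsphere : Set.EqOn (fun w => ‖w‖ ^ 2)
      (fun w => (‖z‖ ^ 2 + s ^ 2) + (2 * conj z * (w - z)).re) (sphere z |s|) := by
    intro w hw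
    have hws : ‖w - z‖ ^ 2 = s ^ 2 := by
      rw [← dist_eq_norm, mem_sphere.1 hw, sq_abs]
    dsimp only
    rw [← hws, ← Complex.normSq_eq_norm_sq, ← Complex.normSq_eq_norm_sq,
      ← Complex.normSq_eq_norm_sq]
    simp [Complex.normSq_apply]
    ring
  rw [circleAverage_congr_sphere hsphere, circleAverage_fun_add (circleIntegrable_const _ _ _)
    ((Continuous.continuousOn (by fun_prop)).circleIntegrable'), circleAverage_const,
    circleAverage_re_of_differentiable (by fun_prop)]
  simp

noncomputable def logAddSq (t : ℝ) : ℝ := Real.log t + t ^ 2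

lemma logAddSq_norm_add_sq_le_circleAverage (hz : z ≠ 0) (hs : s ≠ 0) :
    logAddSq ‖z‖ + s ^ 2 ≤ circleAverage (fun w => logAddSq ‖w‖) z s := by
  have hlog : CircleIntegrable (fun w => Real.log ‖w‖) z s := by
    simpa using circleIntegrable_log_norm_sub_const (a := 0) (c := z) s
  have hsq : CircleIntegrable (fun w => ‖w‖ ^ 2) z s :=
    (Continuous.continuousOn (by fun_prop)).circleIntegrable'
  simp only [logAddSq]
  rw [circleAverage_fun_add hlog hsq, circleAverage_norm_sq]
  linarith [log_norm_le_circleAverage_log_norm hz hs]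

lemma continuousOn_logAddSq_norm : ContinuousOn (fun w : ℂ => logAddSq ‖w‖) {0}ᶜ := by
  unfold logAddSq
  exact ContinuousOn.add (ContinuousOn.log (by fun_prop) fun w hw => norm_ne_zero_iff.2 hw)
    (by fun_prop)

lemma SubmeanOn.add_logAddSq_lt (h : SubmeanOn u S) (hu : ContinuousOn u S) (h0 : (0 : ℂ) ∉ S)
    (hκ : 0 < κ) (hs : 0 < s) (hzs : closedBall z s ⊆ S) :
    u z + κ * logAddSq ‖z‖ < circleAverage (fun w => u w + κ * logAddSq ‖w‖) z s := by
  have hz : z ≠ 0 := fun hz => h0 (hz ▸ hzs (mem_closedBall_self hs.le))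
  have hb : CircleIntegrable (fun w => κ * logAddSq ‖w‖) z s :=
    (continuousOn_logAddSq_norm.circleIntegrable_of_closedBall_subset hs.le
      (fun w hw => by rintro rfl; exact h0 (hzs hw))).const_mul κ
  rw [circleAverage_fun_add (hu.circleIntegrable_of_closedBall_subset hs.le hzs) hb]
  have hmul : circleAverage (fun w => κ * logAddSq ‖w‖) z s =
      κ * circleAverage (fun w => logAddSq ‖w‖) z s :=
    circleAverage_fun_smul (f := fun w => logAddSq ‖w‖) (a := κ)
  rw [hmul]
  have := mul_le_mul_of_nonneg_left (logAddSq_norm_add_sq_le_circleAverage hz hs.ne') hκ.le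
  linarith [h z s hs hzs, mul_pos hκ (pow_pos hs 2)]

theorem IsCompact.exists_le_of_lt_circleAverage {K B : Set ℂ} (hK : IsCompact K)
    (hu : ContinuousOn u K)
    (hlt : ∀ z ∈ K \ B, ∃ s > 0, sphere z s ⊆ K ∧ u z < circleAverage u z s) (hz : z ∈ K) :
    ∃ w ∈ K ∩ B, u z ≤ u w := by
  obtain ⟨w, hwK, hmax⟩ := hK.exists_isMaxOn ⟨z, hz⟩ hu
  refine ⟨w, ⟨hwK, ?_⟩, hmax hz⟩
  by_contra hwB
  obtain ⟨s, hs, hsK, hws⟩ := hlt w ⟨hwK, hwB⟩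
  have hle : circleAverage u w s ≤ u w :=
    circleAverage_mono_on_of_le_circle ((hu.mono hsK).circleIntegrable hs.le)
      fun x hx => hmax (hsK (by rwa [abs_of_pos hs] at hx))
  exact hws.not_ge hle

lemma closedBall_subset_annulus {δ : ℝ} (hδ : s ≤ ‖z‖ - δ) (hr : s ≤ r - ‖z‖) :
    closedBall z s ⊆ closedBall 0 r \ ball 0 δ := by
  intro w hw
  rw [mem_closedBall, dist_eq_norm] at hw
  have h1 := norm_sub_norm_le w z
  have h2 := norm_sub_norm_le z w
  rw [norm_sub_rev] at h2
  simp only [Set.mem_sdiff, mem_closedBall, mem_ball, dist_zero_right, not_lt]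
  constructor <;> linarith

lemma SubmeanOn.exists_norm_eq_add_logAddSq_le (h : SubmeanOn u (closedBall 0 r \ {0}))
    (hu : ContinuousOn u (closedBall 0 r)) (hκ : 0 < κ) (hδ : 0 < δ) (hδz : δ ≤ ‖z‖)
    (hzr : ‖z‖ ≤ r) :
    ∃ w : ℂ, (‖w‖ = δ ∨ ‖w‖ = r) ∧ u z + κ * logAddSq ‖z‖ ≤ u w + κ * logAddSq ‖w‖ := by
  set K := closedBall (0 : ℂ) r \ ball 0 δ
  have hKS : K ⊆ closedBall 0 r \ {0} :=
    Set.sdiff_subset_sdiff_right (Set.singleton_subset_iff.2 (mem_ball_self hδ))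
  have hK0 : (0 : ℂ) ∉ closedBall 0 r \ {0} := fun h0 => h0.2 rfl
  have huS : ContinuousOn u (closedBall 0 r \ {0}) := hu.mono Set.sdiff_subset
  have hχ : ContinuousOn (fun w => u w + κ * logAddSq ‖w‖) K :=
    (huS.mono hKS).add (continuousOn_const.mul (continuousOn_logAddSq_norm.mono
      fun w hw => fun hw0 => hK0 (hw0 ▸ hKS hw)))
  have hzK : z ∈ K := by simp [K, hδz, hzr]
  have hlt : ∀ x ∈ K \ {w | ‖w‖ = δ ∨ ‖w‖ = r}, ∃ s > 0, sphere x s ⊆ K ∧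
      u x + κ * logAddSq ‖x‖ < circleAverage (fun w => u w + κ * logAddSq ‖w‖) x s := by
    rintro x ⟨hxK, hxB⟩
    simp only [K, Set.mem_sdiff, mem_closedBall, mem_ball, dist_zero_right, not_lt] at hxK
    simp only [Set.mem_ofPred_eq, not_or] at hxB
    have hs : 0 < min (‖x‖ - δ) (r - ‖x‖) := lt_min (by grind) (by grind)
    have hsK : closedBall x _ ⊆ K := closedBall_subset_annulus (min_le_left _ _) (min_le_right _ _)
    exact ⟨_, hs, sphere_subset_closedBall.trans hsK,
      h.add_logAddSq_lt huS hK0 hκ hs (hsK.trans hKS)⟩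
  obtain ⟨w, ⟨-, hw⟩, hzw⟩ :=
    ((isCompact_closedBall 0 r).diff isOpen_ball).exists_le_of_lt_circleAverage hχ hlt hzK
  exact ⟨w, hw, hzw⟩

lemma SubmeanOn.add_logAddSq_le (h : SubmeanOn u (closedBall 0 r \ {0}))
    (hu : ContinuousOn u (closedBall 0 r)) (hM : ∀ w ∈ sphere (0 : ℂ) r, u w ≤ M) (hκ : 0 < κ)
    (hz : z ≠ 0) (hzr : ‖z‖ ≤ r) :
    u z + κ * logAddSq ‖z‖ ≤ M + κ * logAddSq r := by
  obtain ⟨B, hB⟩ := (isCompact_closedBall (0 : ℂ) r).bddAbove_image hu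
  have hz0 : 0 < ‖z‖ := norm_pos_iff.2 hz
  -- `δ` is so small that `κ * log δ` compensates the bound `B` of `u` on the inner circle.
  set δ := min ‖z‖ (r * Real.exp ((M - B) / κ))
  have hδ : 0 < δ := lt_min hz0 (mul_pos (hz0.trans_le hzr) (Real.exp_pos _))
  obtain ⟨w, hw, hzw⟩ :=
    h.exists_norm_eq_add_logAddSq_le hu hκ hδ (min_le_left _ _) hzr
  refine hzw.trans ?_
  rcases hw with hwδ | hwr
  · have hr : 0 < r := hz0.trans_le hzr
    have hδr : δ ≤ r := (min_le_left _ _).trans hzr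
    have huw : u w ≤ B := hB ⟨w, mem_closedBall_zero_iff.2 (hwδ ▸ hδr), rfl⟩
    have hlog : κ * Real.log δ ≤ κ * Real.log r + (M - B) := by
      have := Real.log_le_log hδ (min_le_right _ _)
      rw [Real.log_mul hr.ne' (Real.exp_pos _).ne', Real.log_exp] at this
      calc κ * Real.log δ ≤ κ * (Real.log r + (M - B) / κ) := by gcongr
        _ = κ * Real.log r + (M - B) := by field_simp
    have hsq : κ * δ ^ 2 ≤ κ * r ^ 2 := by gcongr
    rw [hwδ, logAddSq, logAddSq]
    linarith
  · rw [hwr]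
    linarith [hM w (by simpa using hwr)]

lemma SubmeanOn.le_of_ne_zero (h : SubmeanOn u (closedBall 0 r \ {0}))
    (hu : ContinuousOn u (closedBall 0 r)) (hM : ∀ w ∈ sphere (0 : ℂ) r, u w ≤ M)
    (hz : z ≠ 0) (hzr : ‖z‖ ≤ r) : u z ≤ M := by
  have hlim : Tendsto (fun κ => M + κ * (logAddSq r - logAddSq ‖z‖)) (𝓝[>] 0) (𝓝 M) := by
    have : Continuous fun κ : ℝ => M + κ * (logAddSq r - logAddSq ‖z‖) := by fun_prop
    simpa using this.tendsto 0 |>.mono_left nhdsWithin_le_nhds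
  refine ge_of_tendsto hlim (eventually_nhdsWithin_of_forall fun κ hκ => ?_)
  linarith [h.add_logAddSq_le hu hM hκ hz hzr]

theorem SubmeanOn.le_of_forall_sphere_le (h : SubmeanOn u (closedBall 0 r \ {0}))
    (hu : ContinuousOn u (closedBall 0 r)) (hr : 0 < r) (hM : ∀ w ∈ sphere (0 : ℂ) r, u w ≤ M) :
    u 0 ≤ M := by
  have hball : closedBall (0 : ℂ) r ∈ 𝓝 0 := closedBall_mem_nhds 0 hr
  refine le_of_tendsto ((hu.continuousAt hball).tendsto.mono_left
    (nhdsWithin_le_nhds (s := {0}ᶜ))) ?_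
  filter_upwards [self_mem_nhdsWithin, nhdsWithin_le_nhds hball] with z hz hzr
  exact h.le_of_ne_zero hu hM hz (mem_closedBall_zero_iff.1 hzr)

lemma fourier_natCast_coe_eq_pow (hr : r ≠ 0) (k : ℕ) (θ : ℝ) :
    fourier (k : ℤ) (θ : AddCircle (2 * π)) = (circleMap 0 r θ / r) ^ k := by
  rw [fourier_coe_apply, circleMap, zero_add, mul_div_cancel_left₀ _ (ofReal_ne_zero.2 hr),
    ← Complex.exp_nat_mul]
  congr 1
  field_simp
  push_cast
  ring

lemma exists_differentiable_of_mem_span_fourier (hr : r ≠ 0) {g : C(AddCircle (2 * π), ℂ)}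
    (hg : g ∈ Submodule.span ℂ (Set.range fourier)) :
    ∃ P Q : ℂ → ℂ, Differentiable ℂ P ∧ Differentiable ℂ Q ∧
      ∀ θ : ℝ, g θ = P (circleMap 0 r θ) + conj (Q (circleMap 0 r θ)) := by
  induction hg using Submodule.span_induction with
  | mem g hg =>
    obtain ⟨n, rfl⟩ := hg
    obtain ⟨k, rfl | rfl⟩ := Int.eq_nat_or_neg n
    · exact ⟨fun w => (w / r) ^ k, 0, by fun_prop, differentiable_const 0,
        fun θ => by simp [fourier_natCast_coe_eq_pow hr]⟩
    · exact ⟨0, fun w => (w / r) ^ k, differentiable_const 0, by fun_prop,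
        fun θ => by rw [fourier_neg, fourier_natCast_coe_eq_pow hr]; simp⟩
  | zero => exact ⟨0, 0, differentiable_const 0, differentiable_const 0, by simp⟩
  | add g₁ g₂ _ _ ih₁ ih₂ =>
    obtain ⟨P₁, Q₁, hP₁, hQ₁, h₁⟩ := ih₁
    obtain ⟨P₂, Q₂, hP₂, hQ₂, h₂⟩ := ih₂
    exact ⟨P₁ + P₂, Q₁ + Q₂, hP₁.add hP₂, hQ₁.add hQ₂, fun θ => by
      simp only [ContinuousMap.add_apply, h₁, h₂, Pi.add_apply, map_add]; ring⟩
  | smul a g _ ih =>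
    obtain ⟨P, Q, hP, hQ, h⟩ := ih
    exact ⟨a • P, conj a • Q, hP.const_smul a, hQ.const_smul _, fun θ => by
      simp only [ContinuousMap.smul_apply, h, Pi.smul_apply, smul_eq_mul, map_mul, conj_conj]
      ring⟩

theorem exists_differentiable_abs_re_sub_le {φ : ℂ → ℝ} (hr : 0 < r)
    (hφ : ContinuousOn φ (sphere 0 r)) {ε : ℝ} (hε : 0 < ε) :
    ∃ F : ℂ → ℂ, Differentiable ℂ F ∧ ∀ w ∈ sphere (0 : ℂ) r, |(F w).re - φ w| ≤ ε := by
  have : Fact (0 < 2 * π) := ⟨two_pi_pos⟩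
  have hmaps : ∀ θ, circleMap 0 r θ ∈ sphere 0 r := by simp [abs_of_pos hr]
  set f : ℝ → ℂ := fun θ => (φ (circleMap 0 r θ) : ℂ)
  have hf : Continuous f :=
    continuous_ofReal.comp (hφ.comp_continuous (continuous_circleMap 0 r) hmaps)
  have hper : Function.Periodic f (2 * π) := fun θ => by simp [f, periodic_circleMap 0 r θ]
  let F₀ : C(AddCircle (2 * π), ℂ) := ⟨hper.lift, hf.quotient_liftOn' _⟩
  have hF₀ : F₀ ∈ closure (Submodule.span ℂ (Set.range (@fourier (2 * π))) : Set _) := by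
    rw [← Submodule.topologicalClosure_coe, span_fourier_closure_eq_top]
    trivial
  obtain ⟨g, hg, hdist⟩ := Metric.mem_closure_iff.1 hF₀ ε hε
  obtain ⟨P, Q, hP, hQ, hPQ⟩ := exists_differentiable_of_mem_span_fourier hr.ne' hg
  refine ⟨P + Q, hP.add hQ, fun w hw => ?_⟩
  obtain ⟨θ, -, rfl⟩ : w ∈ circleMap 0 r '' Set.Ioc 0 (2 * π) := by
    rwa [image_circleMap_Ioc, abs_of_pos hr]
  calc |((P + Q) (circleMap 0 r θ)).re - φ (circleMap 0 r θ)| = |(g θ - F₀ θ).re| := by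
        simp [hPQ θ, show F₀ θ = f θ from rfl, f]
    _ ≤ dist (g θ) (F₀ θ) := by rw [dist_eq_norm]; exact abs_re_le_norm _
    _ ≤ dist g F₀ := ContinuousMap.dist_apply_le_dist _
    _ ≤ ε := by rw [dist_comm]; exact hdist.le

theorem submean_at_zero_of_submean_off_zero
    (φ : ℂ → ℝ) (hφcont : ContinuousOn φ (Metric.ball (0:ℂ) 1))
    (hsub : ∀ (z : ℂ) (r : ℝ), z ≠ 0 → 0 < r →
      Metric.closedBall z r ⊆ Metric.ball (0:ℂ) 1 \ {0} →
      φ z ≤ (2 * Real.pi)⁻¹ *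
        ∫ θ in (0:ℝ)..(2 * Real.pi), φ (z + r * Complex.exp (θ * Complex.I))) :
    ∀ r : ℝ, 0 < r → r < 1 →
      φ 0 ≤ (2 * Real.pi)⁻¹ *
        ∫ θ in (0:ℝ)..(2 * Real.pi), φ (r * Complex.exp (θ * Complex.I)) := by
  intro r hr hr1
  have hφ : SubmeanOn φ (ball 0 1 \ {0}) := fun z s hs hzs =>
    hsub z s (fun hz => (hzs (mem_closedBall_self hs.le)).2 hz) hs hzs
  have hball : closedBall (0 : ℂ) r ⊆ ball 0 1 := closedBall_subset_ball hr1
  have hφr : ContinuousOn φ (closedBall 0 r) := hφcont.mono hball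
  suffices φ 0 ≤ circleAverage φ 0 r by simpa [circleAverage_def, circleMap] using this
  refine le_of_forall_pos_le_add fun ε hε => ?_
  obtain ⟨F, hF, hFφ⟩ :=
    exists_differentiable_abs_re_sub_le hr (hφr.mono sphere_subset_closedBall) (half_pos hε)
  have hFre : Continuous fun w => (F w).re := continuous_re.comp hF.continuous
  have h0 : φ 0 - (F 0).re ≤ ε / 2 :=
    ((hφ.mono (Set.sdiff_subset_sdiff_left hball)).sub_re (hφr.mono Set.sdiff_subset) hF
      ).le_of_forall_sphere_le (hφr.sub hFre.continuousOn) hr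
      fun w hw => by linarith [(abs_le.1 (hFφ w hw)).1]
  have hφint : CircleIntegrable φ 0 r :=
    hφr.circleIntegrable_of_closedBall_subset hr.le subset_rfl
  have hmean : circleAverage (fun w => (F w).re - φ w) 0 r ≤ ε / 2 :=
    circleAverage_mono_on_of_le_circle (hFre.continuousOn.circleIntegrable'.sub hφint)
      fun w hw => (abs_le.1 (hFφ w (by rwa [abs_of_pos hr] at hw))).2
  rw [circleAverage_fun_sub (f₁ := fun w => (F w).re) hFre.continuousOn.circleIntegrable' hφint,
    circleAverage_re_of_differentiable hF] at hmean
  linarith
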